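/- arXiv:1403.5369 — 3 statements merged into one kernel-verified Lean document; each statement's English description precedes it below -/
import Mathlib

section
/- Let d ≥ 1, T > 0 and R > 0. There exists a constant C = C(R, T, d) > 0 with the following property. Let u, û : [0,T] × ℝ^d → ℝ^d be bounded measurable in t, 2π-periodic in each space coordinate and C¹ in x, with ‖u‖_{L^∞([0,T],C¹)} + ‖û‖_{L^∞([0,T],C¹)} ≤ R and sup_{t∈[0,T]} sup_{x∈ℝ^d} |∫₀ᵗ (u(s,x) − û(s,x)) ds| ≤ 1. Then sup_{t∈[0,T]} sup_{y∈ℝ^d} |φ^u_t(y) − φ^{û}_t(y)| ≤ C · ( sup_{t∈[0,T]} sup_{x∈ℝ^d} |∫₀ᵗ (u(s,x) − û(s,x)) ds| )^{1/2}. -/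
open MeasureTheory Set

noncomputable section

open Filter Topology

/-- The vector `2π k ∈ ℝ^d` associated with an integer vector `k ∈ ℤ^d`. -/
def latticeVec (d : ℕ) (k : Fin d → ℤ) : EuclideanSpace ℝ (Fin d) :=
  WithLp.toLp 2 (fun i => 2 * Real.pi * k i)

/-- `u` is `2π`-periodic in each space coordinate. -/
def SpacePeriodic {d : ℕ}
    (u : ℝ → EuclideanSpace ℝ (Fin d) → EuclideanSpace ℝ (Fin d)) : Prop :=
  ∀ (t : ℝ) (x : EuclideanSpace ℝ (Fin d)) (k : Fin d → ℤ),
    u t (x + latticeVec d k) = u t x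

/-- `φ` is the flow of the time-dependent vector field `u` on `[0,T]`:
`φ t y = y + ∫₀ᵗ u s (φ s y) ds`. -/
def IsFlow {d : ℕ} (T : ℝ)
    (u φ : ℝ → EuclideanSpace ℝ (Fin d) → EuclideanSpace ℝ (Fin d)) : Prop :=
  ∀ t ∈ Icc (0 : ℝ) T, ∀ y, φ t y = y + ∫ s in (0 : ℝ)..t, u s (φ s y)

section AuxLemmas

variable {d : ℕ}

/-- A bounded a.e. strongly measurable function is integrable on a bounded interval. -/
lemma bddIntegrableOnIoc {f : ℝ → EuclideanSpace ℝ (Fin d)} {a b R : ℝ}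
    (hm : AEStronglyMeasurable f (volume.restrict (Ioc a b)))
    (hb : ∀ s ∈ Ioc a b, ‖f s‖ ≤ R) : IntegrableOn f (Ioc a b) :=
  ⟨hm, HasFiniteIntegral.restrict_of_bounded (C := R) measure_Ioc_lt_top
    ((ae_restrict_iff' measurableSet_Ioc).2 (ae_of_all _ hb))⟩

/-- Carathéodory-type measurability of `s ↦ u s (p s)` on `[0,T]`. -/
lemma comp_aesm {T : ℝ} (u : ℝ → EuclideanSpace ℝ (Fin d) → EuclideanSpace ℝ (Fin d))
    (hmeas : ∀ x, Measurable fun t => u t x)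
    (hcont : ∀ t ∈ Icc (0:ℝ) T, Continuous (u t))
    (p : ℝ → EuclideanSpace ℝ (Fin d)) (hp : Measurable p) :
    AEStronglyMeasurable (fun s => u s (p s)) (volume.restrict (Icc (0:ℝ) T)) := by
  classical
  set u' : ℝ → EuclideanSpace ℝ (Fin d) → EuclideanSpace ℝ (Fin d) :=
    fun t x => if t ∈ Icc (0:ℝ) T then u t x else 0 with hu'
  have hm : Measurable (Function.uncurry fun (x : EuclideanSpace ℝ (Fin d)) (t : ℝ) => u' t x) := by
    apply measurable_uncurry_of_continuous_of_measurable
    · intro t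
      by_cases ht : t ∈ Icc (0:ℝ) T
      · have he : (fun x => u' t x) = u t := by funext x; simp only [u', if_pos ht]
        rw [he]; exact hcont t ht
      · have he : (fun x => u' t x) = fun _ => 0 := by funext x; simp only [u', if_neg ht]
        rw [he]; exact continuous_const
    · intro x
      exact Measurable.ite measurableSet_Icc (hmeas x) measurable_const
  have hm2 : Measurable fun s => u' s (p s) := hm.comp (hp.prodMk measurable_id)
  refine hm2.aestronglyMeasurable.congr ?_
  refine (ae_restrict_iff' measurableSet_Icc).2 (ae_of_all _ fun s hs => ?_)
  simp only [u', if_pos hs]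

/-- Regularity of a flow: integrability of the integrand, continuity of the path,
and existence of a globally measurable representative of the path. -/
lemma flow_good {T R : ℝ} (hT : 0 ≤ T)
    (u : ℝ → EuclideanSpace ℝ (Fin d) → EuclideanSpace ℝ (Fin d))
    (φy : ℝ → EuclideanSpace ℝ (Fin d)) (y : EuclideanSpace ℝ (Fin d))
    (hmeas : ∀ x, Measurable fun t => u t x)
    (hcont : ∀ t ∈ Icc (0:ℝ) T, Continuous (u t))
    (hbound : ∀ t ∈ Icc (0:ℝ) T, ∀ x, ‖u t x‖ ≤ R)
    (hflow : ∀ t ∈ Icc (0:ℝ) T, φy t = y + ∫ s in (0:ℝ)..t, u s (φy s)) :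
    IntegrableOn (fun s => u s (φy s)) (Ioc (0:ℝ) T) ∧
      ContinuousOn φy (Icc (0:ℝ) T) ∧
      ∃ p : ℝ → EuclideanSpace ℝ (Fin d), Measurable p ∧ ∀ s ∈ Icc (0:ℝ) T, p s = φy s := by
  classical
  set g : ℝ → EuclideanSpace ℝ (Fin d) := fun s => u s (φy s) with hg
  have hgb : ∀ s ∈ Icc (0:ℝ) T, ‖g s‖ ≤ R := fun s hs => hbound s hs _
  set P : Set ℝ := {t | t ∈ Icc (0:ℝ) T ∧ IntegrableOn g (Ioc 0 t)} with hP
  have h0P : (0:ℝ) ∈ P := ⟨⟨le_refl 0, hT⟩, by simp⟩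
  have hPub : ∀ t ∈ P, t ≤ T := fun t ht => ht.1.2
  have hPbdd : BddAbove P := ⟨T, hPub⟩
  set τ : ℝ := sSup P with hτ
  have hτ0 : 0 ≤ τ := le_csSup hPbdd h0P
  have hτT : τ ≤ T := csSup_le ⟨0, h0P⟩ hPub
  -- integrability up to τ
  have hIτ : IntegrableOn g (Ioc 0 τ) := by
    obtain ⟨q, hqmono, hqlim, hqmem⟩ := exists_seq_tendsto_sSup ⟨0, h0P⟩ hPbdd
    have hsub : Ioo (0:ℝ) τ ⊆ ⋃ n, Ioc 0 (q n) := by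
      intro s hs
      obtain ⟨n, hn⟩ := (hqlim.eventually (eventually_gt_nhds hs.2)).exists
      exact mem_iUnion.2 ⟨n, hs.1, hn.le⟩
    have hmOoo : AEStronglyMeasurable g (volume.restrict (Ioo 0 τ)) := by
      have hU : AEStronglyMeasurable g (volume.restrict (⋃ n, Ioc 0 (q n))) :=
        aestronglyMeasurable_iUnion_iff.2 fun n => ((hqmem n).2).aestronglyMeasurable
      exact hU.mono_set hsub
    have hOoo : IntegrableOn g (Ioo 0 τ) := by
      refine ⟨hmOoo, HasFiniteIntegral.restrict_of_bounded (C := R) measure_Ioo_lt_top ?_⟩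
      exact (ae_restrict_iff' measurableSet_Ioo).2 (ae_of_all _ fun s hs =>
        hgb s ⟨hs.1.le, hs.2.le.trans hτT⟩)
    exact (integrableOn_Ioc_iff_integrableOn_Ioo (hb := enorm_ne_top)).2 hOoo
  -- beyond τ the flow is frozen at y
  have hfrozen : ∀ s ∈ Icc (0:ℝ) T, τ < s → φy s = y := by
    intro s hs hτs
    have hnint : ¬ IntegrableOn g (Ioc 0 s) := fun h =>
      absurd (le_csSup hPbdd (⟨hs, h⟩ : s ∈ P)) (not_le.2 hτs)
    rw [hflow s hs, intervalIntegral.integral_of_le hs.1, MeasureTheory.integral_undef hnint,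
      add_zero]
  -- a measurable function agreeing with the path on [0,T]
  have hprim : ContinuousOn (fun r => ∫ x in (0:ℝ)..r, g x) (Icc 0 τ) := by
    have hi : IntegrableOn g (uIcc 0 τ) := by
      rw [uIcc_of_le hτ0, integrableOn_Icc_iff_integrableOn_Ioc]; exact hIτ
    simpa [uIcc_of_le hτ0] using intervalIntegral.continuousOn_primitive_interval hi
  set clamp : ℝ → ℝ := fun s => min (max s 0) τ with hclampdef
  have hclampc : Continuous clamp := (continuous_id.max continuous_const).min continuous_const
  have hclampmem : ∀ s, clamp s ∈ Icc (0:ℝ) τ := fun s =>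
    ⟨le_min (le_max_right _ _) hτ0, min_le_right _ _⟩
  set F : ℝ → EuclideanSpace ℝ (Fin d) :=
    fun s => y + ∫ x in (0:ℝ)..(clamp s), g x with hF
  have hFc : Continuous F :=
    continuous_const.add (hprim.comp_continuous hclampc hclampmem)
  set p : ℝ → EuclideanSpace ℝ (Fin d) := fun s => if s ≤ τ then F s else y with hp
  have hpm : Measurable p := Measurable.ite measurableSet_Iic hFc.measurable measurable_const
  have hpeq : ∀ s ∈ Icc (0:ℝ) T, p s = φy s := by
    intro s hs
    by_cases hsτ : s ≤ τ
    · have hcl : clamp s = s := by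
        simp only [clamp]; rw [max_eq_left hs.1, min_eq_left hsτ]
      simp only [p, if_pos hsτ, F, hcl]
      exact (hflow s hs).symm
    · simp only [p, if_neg hsτ]
      exact (hfrozen s hs (not_le.1 hsτ)).symm
  -- full integrability
  have hgm : AEStronglyMeasurable g (volume.restrict (Icc (0:ℝ) T)) := by
    have h1 := comp_aesm (T := T) u hmeas hcont p hpm
    refine h1.congr ((ae_restrict_iff' measurableSet_Icc).2 (ae_of_all _ fun s hs => ?_))
    show u s (p s) = g s
    rw [hpeq s hs]
  have hIT : IntegrableOn g (Ioc 0 T) := by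
    refine ⟨hgm.mono_set Ioc_subset_Icc_self,
      HasFiniteIntegral.restrict_of_bounded (C := R) measure_Ioc_lt_top ?_⟩
    exact (ae_restrict_iff' measurableSet_Ioc).2 (ae_of_all _ fun s hs => hgb s ⟨hs.1.le, hs.2⟩)
  refine ⟨hIT, ?_, p, hpm, hpeq⟩
  have hprim2 : ContinuousOn (fun r => y + ∫ x in (0:ℝ)..r, g x) (Icc 0 T) := by
    have hi : IntegrableOn g (uIcc 0 T) := by
      rw [uIcc_of_le hT, integrableOn_Icc_iff_integrableOn_Ioc]; exact hIT
    exact continuousOn_const.add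
      (by simpa [uIcc_of_le hT] using intervalIntegral.continuousOn_primitive_interval hi)
  exact hprim2.congr fun s hs => hflow s hs


lemma gronwall_int (R a M t : ℝ) (n : ℕ) :
    R * ∫ s in (0:ℝ)..t,
        (a * (∑ k ∈ Finset.range n, (R*s)^k / (Nat.factorial k)) + M * ((R*s)^n / (Nat.factorial n)))
      = a * (∑ k ∈ Finset.range n, (R*t)^(k+1) / (Nat.factorial (k+1)))
        + M * ((R*t)^(n+1) / (Nat.factorial (n+1))) := by
  have hterm : ∀ k : ℕ,
      (∫ s in (0:ℝ)..t, (R*s)^k / (Nat.factorial k)) * R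
        = (R*t)^(k+1) / (Nat.factorial (k+1)) := by
    intro k
    have h1 : (fun s : ℝ => (R*s)^k / (Nat.factorial k))
        = fun s : ℝ => (R^k / (Nat.factorial k)) * s^k := by
      funext s; rw [mul_pow]; ring
    rw [h1, intervalIntegral.integral_const_mul, integral_pow]
    have hk0 : ((Nat.factorial k : ℕ) : ℝ) ≠ 0 := Nat.cast_ne_zero.2 k.factorial_ne_zero
    have hk1 : ((k:ℝ) + 1) ≠ 0 := by positivity
    rw [Nat.factorial_succ, mul_pow, zero_pow (Nat.succ_ne_zero k)]
    push_cast
    field_simp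
    ring
  have hci : ∀ k : ℕ, IntervalIntegrable (fun s : ℝ => (R*s)^k / (Nat.factorial k)) volume 0 t :=
    fun k => (((continuous_const.mul continuous_id).pow k).div_const _).intervalIntegrable 0 t
  have hi1 : IntervalIntegrable
      (fun s : ℝ => a * (∑ k ∈ Finset.range n, (R*s)^k / (Nat.factorial k))) volume 0 t :=
    ((continuous_const.mul (continuous_finset_sum _ fun k _ =>
      ((continuous_const.mul continuous_id).pow k).div_const _))).intervalIntegrable 0 t
  have hi2 : IntervalIntegrable (fun s : ℝ => M * ((R*s)^n / (Nat.factorial n))) volume 0 t :=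
    (continuous_const.mul (((continuous_const.mul continuous_id).pow n).div_const _)).intervalIntegrable 0 t
  rw [intervalIntegral.integral_add hi1 hi2, intervalIntegral.integral_const_mul,
    intervalIntegral.integral_const_mul,
    intervalIntegral.integral_finset_sum (fun k _ => hci k)]
  calc R * (a * (∑ k ∈ Finset.range n, ∫ s in (0:ℝ)..t, (R*s)^k / (Nat.factorial k))
        + M * ∫ s in (0:ℝ)..t, (R*s)^n / (Nat.factorial n))
      = a * (∑ k ∈ Finset.range n, (∫ s in (0:ℝ)..t, (R*s)^k / (Nat.factorial k)) * R)
        + M * ((∫ s in (0:ℝ)..t, (R*s)^n / (Nat.factorial n)) * R) := by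
        rw [← Finset.sum_mul]; ring
    _ = a * (∑ k ∈ Finset.range n, (R*t)^(k+1) / (Nat.factorial (k+1)))
        + M * ((R*t)^(n+1) / (Nat.factorial (n+1))) := by
        rw [Finset.sum_congr rfl fun k _ => hterm k, hterm n]

set_option maxHeartbeats 1000000 in
/-- `L^∞` stability of the flow with respect to the relaxation norm:
for `u, û` bounded in `L^∞([0,T], C¹)` by `R` and with
`sup_{t∈[0,T]} sup_x |∫₀ᵗ (u − û)(s,x) ds| ≤ 1`, one has
`sup_{t,y} |φ^u_t(y) − φ^û_t(y)| ≤ C (sup_{t,x} |∫₀ᵗ (u − û)(s,x) ds|)^{1/2}`,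
with `C` depending only on `R, T, d`. -/
theorem flow_stability_sqrt
    (d : ℕ) (hd : 1 ≤ d) (T R : ℝ) (hT : 0 < T) (hR : 0 < R) :
    ∃ C > 0,
      ∀ u uh φu φuh : ℝ → EuclideanSpace ℝ (Fin d) → EuclideanSpace ℝ (Fin d),
        -- bounded measurable dependence on time
        (∀ x, Measurable fun t => u t x) →
        (∀ x, Measurable fun t => uh t x) →
        -- 2π-periodicity in each space coordinate
        SpacePeriodic u → SpacePeriodic uh →
        -- class C¹ in the space variable
        (∀ t ∈ Icc (0 : ℝ) T, ContDiff ℝ 1 (u t)) →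
        (∀ t ∈ Icc (0 : ℝ) T, ContDiff ℝ 1 (uh t)) →
        -- ‖u‖_{L^∞([0,T],C¹)} + ‖û‖_{L^∞([0,T],C¹)} ≤ R
        (∀ t ∈ Icc (0 : ℝ) T, ∀ x,
          ‖u t x‖ + ‖fderiv ℝ (u t) x‖ + ‖uh t x‖ + ‖fderiv ℝ (uh t) x‖ ≤ R) →
        -- the flows of u and û
        IsFlow T u φu → IsFlow T uh φuh →
        -- ρ is a bound for sup_{t,x} |∫₀ᵗ (u − û)(s,x) ds|, with ρ ≤ 1
        ∀ ρ : ℝ, ρ ≤ 1 →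
        (∀ t ∈ Icc (0 : ℝ) T, ∀ x,
          ‖∫ s in (0 : ℝ)..t, (u s x - uh s x)‖ ≤ ρ) →
        -- conclusion
        ∀ t ∈ Icc (0 : ℝ) T, ∀ y,
          ‖φu t y - φuh t y‖ ≤ C * ρ ^ ((1 : ℝ) / 2) := by
  classical
  have hR0 : (0:ℝ) ≤ R := hR.le
  refine ⟨(2*R^2*T + 2*T + 4) * Real.exp (R*T), by positivity, ?_⟩
  intro u uh φu φuh hu_m huh_m _hp1 _hp2 hu_c1 huh_c1 hbound hflow_u hflow_uh ρ hρ1 hρb t ht y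
  set A : ℝ := 2*R^2*T + 2*T + 4 with hAdef
  have hA0 : (0:ℝ) < A := by positivity
  -- basic norm bounds
  have hbu : ∀ s ∈ Icc (0:ℝ) T, ∀ x, ‖u s x‖ ≤ R := by
    intro s hs x
    have h := hbound s hs x
    have n1 := norm_nonneg (fderiv ℝ (u s) x); have n2 := norm_nonneg (uh s x)
    have n3 := norm_nonneg (fderiv ℝ (uh s) x); linarith
  have hbuh : ∀ s ∈ Icc (0:ℝ) T, ∀ x, ‖uh s x‖ ≤ R := by
    intro s hs x
    have h := hbound s hs x
    have n1 := norm_nonneg (fderiv ℝ (u s) x); have n0 := norm_nonneg (u s x)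
    have n3 := norm_nonneg (fderiv ℝ (uh s) x); linarith
  have hbw : ∀ s ∈ Icc (0:ℝ) T, ∀ x, ‖u s x - uh s x‖ ≤ R := by
    intro s hs x
    have h := hbound s hs x
    have n1 := norm_nonneg (fderiv ℝ (u s) x)
    have n3 := norm_nonneg (fderiv ℝ (uh s) x)
    calc ‖u s x - uh s x‖ ≤ ‖u s x‖ + ‖uh s x‖ := norm_sub_le _ _
      _ ≤ R := by linarith
  have hLipu : ∀ s ∈ Icc (0:ℝ) T, ∀ a b : EuclideanSpace ℝ (Fin d),
      ‖u s a - u s b‖ ≤ R * ‖a - b‖ := by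
    intro s hs a b
    refine convex_univ.norm_image_sub_le_of_norm_fderiv_le
      (fun x _ => ((hu_c1 s hs).differentiable one_ne_zero).differentiableAt)
      (fun x _ => ?_) (mem_univ b) (mem_univ a)
    have h := hbound s hs x
    have n0 := norm_nonneg (u s x); have n2 := norm_nonneg (uh s x)
    have n3 := norm_nonneg (fderiv ℝ (uh s) x); linarith
  have hLipuh : ∀ s ∈ Icc (0:ℝ) T, ∀ a b : EuclideanSpace ℝ (Fin d),
      ‖uh s a - uh s b‖ ≤ R * ‖a - b‖ := by
    intro s hs a b
    refine convex_univ.norm_image_sub_le_of_norm_fderiv_le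
      (fun x _ => ((huh_c1 s hs).differentiable one_ne_zero).differentiableAt)
      (fun x _ => ?_) (mem_univ b) (mem_univ a)
    have h := hbound s hs x
    have n0 := norm_nonneg (u s x); have n2 := norm_nonneg (uh s x)
    have n1 := norm_nonneg (fderiv ℝ (u s) x); linarith
  have hu_cont : ∀ s ∈ Icc (0:ℝ) T, Continuous (u s) := fun s hs => (hu_c1 s hs).continuous
  have huh_cont : ∀ s ∈ Icc (0:ℝ) T, Continuous (uh s) := fun s hs => (huh_c1 s hs).continuous
  -- flow regularity
  obtain ⟨hIu, hCu, pu, hpum, hpueq⟩ :=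
    flow_good hT.le u (fun s => φu s y) y hu_m hu_cont hbu (fun s hs => hflow_u s hs y)
  obtain ⟨hIuh, hCuh, puh, hpuhm, hpuheq⟩ :=
    flow_good hT.le uh (fun s => φuh s y) y huh_m huh_cont hbuh (fun s hs => hflow_uh s hs y)
  have hsub : ∀ {f : ℝ → EuclideanSpace ℝ (Fin d)}, IntegrableOn f (Ioc (0:ℝ) T) →
      ∀ a b : ℝ, 0 ≤ a → a ≤ b → b ≤ T → IntervalIntegrable f volume a b :=
    fun {f} hf a b ha hab hb =>
      (intervalIntegrable_iff_integrableOn_Ioc_of_le hab).2 (hf.mono_set (Ioc_subset_Ioc ha hb))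
  -- cross term integrability
  have hIc : IntegrableOn (fun s => u s (φuh s y)) (Ioc (0:ℝ) T) := by
    have hc_m : AEStronglyMeasurable (fun s => u s (φuh s y))
        (volume.restrict (Icc (0:ℝ) T)) := by
      refine (comp_aesm (T := T) u hu_m hu_cont puh hpuhm).congr
        ((ae_restrict_iff' measurableSet_Icc).2 (ae_of_all _ fun s hs => ?_))
      show u s (puh s) = u s (φuh s y)
      rw [hpuheq s hs]
    exact ⟨hc_m.mono_set Ioc_subset_Icc_self,
      HasFiniteIntegral.restrict_of_bounded (C := R) measure_Ioc_lt_top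
        ((ae_restrict_iff' measurableSet_Ioc).2 (ae_of_all _ fun s hs =>
          hbu s ⟨hs.1.le, hs.2⟩ _))⟩
  have hw_int : ∀ (x : EuclideanSpace ℝ (Fin d)) (a b : ℝ), 0 ≤ a → a ≤ b → b ≤ T →
      IntervalIntegrable (fun s => u s x - uh s x) volume a b := by
    intro x a b ha hab hbT
    refine (intervalIntegrable_iff_integrableOn_Ioc_of_le hab).2
      ⟨((hu_m x).sub (huh_m x)).aestronglyMeasurable.restrict,
        HasFiniteIntegral.restrict_of_bounded (C := R) measure_Ioc_lt_top
          ((ae_restrict_iff' measurableSet_Ioc).2 (ae_of_all _ fun s hs =>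
            hbw s ⟨ha.trans hs.1.le, hs.2.trans hbT⟩ x))⟩
  -- the square root
  have hρ0 : 0 ≤ ρ := by simpa using hρb 0 ⟨le_rfl, hT.le⟩ 0
  set σ : ℝ := Real.sqrt ρ with hσdef
  have hσ0 : 0 ≤ σ := Real.sqrt_nonneg ρ
  have hσsq : σ * σ = ρ := Real.mul_self_sqrt hρ0
  have hσ1 : σ ≤ 1 := by nlinarith [sq_nonneg (σ - 1)]
  have hρσ : ρ ≤ σ := by nlinarith [mul_le_mul_of_nonneg_left hσ1 hσ0]
  -- the deviation
  set δ : ℝ → ℝ := fun s => ‖φu s y - φuh s y‖ with hδdef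
  have hδcont : ContinuousOn δ (Icc (0:ℝ) T) := (hCu.sub hCuh).norm
  have hδint : ∀ t' : ℝ, t' ∈ Icc (0:ℝ) T → IntervalIntegrable δ volume 0 t' := by
    intro t' ht'
    apply ContinuousOn.intervalIntegrable
    rw [uIcc_of_le ht'.1]
    exact hδcont.mono (Icc_subset_Icc_right ht'.2)
  -- the relaxation-norm bound on the mixed term
  have hB : ∀ t' ∈ Icc (0:ℝ) T,
      ‖∫ s in (0:ℝ)..t', (u s (φuh s y) - uh s (φuh s y))‖ ≤ A * σ := by
    intro t' ht'
    have hgw_int : ∀ a b : ℝ, 0 ≤ a → a ≤ b → b ≤ T →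
        IntervalIntegrable (fun s => u s (φuh s y) - uh s (φuh s y)) volume a b :=
      fun a b ha hab hb => ((hsub hIc a b ha hab hb).sub (hsub hIuh a b ha hab hb))
    have hpart : ∀ N : ℕ, 0 < N →
        ‖∫ s in (0:ℝ)..t', (u s (φuh s y) - uh s (φuh s y))‖ ≤ 2*R^2*t'^2/N + 2*ρ*N := by
      intro N hN
      have hNR : (0:ℝ) < N := Nat.cast_pos.2 hN
      set a : ℕ → ℝ := fun i => i * (t'/N) with hadef
      have hh0 : 0 ≤ t'/N := div_nonneg ht'.1 hNR.le
      have hmono : ∀ i j : ℕ, i ≤ j → a i ≤ a j := fun i j hij =>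
        mul_le_mul_of_nonneg_right (Nat.cast_le.2 hij) hh0
      have haN : a N = t' := by
        show (N:ℝ) * (t'/N) = t'
        field_simp
      have haT : ∀ i : ℕ, i ≤ N → a i ∈ Icc (0:ℝ) T := by
        intro i hi
        refine ⟨mul_nonneg (Nat.cast_nonneg i) hh0, ?_⟩
        have h1 : a i ≤ a N := hmono i N hi
        rw [haN] at h1; exact h1.trans ht'.2
      have hint : ∀ k < N, IntervalIntegrable
          (fun s => u s (φuh s y) - uh s (φuh s y)) volume (a k) (a (k+1)) :=
        fun k hk => hgw_int (a k) (a (k+1)) (haT k hk.le).1 (hmono k (k+1) k.le_succ)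
          (haT (k+1) hk).2
      have hsum := intervalIntegral.sum_integral_adjacent_intervals hint
      have ha0 : a 0 = 0 := by
        show ((0:ℕ):ℝ) * (t'/N) = 0
        simp
      rw [ha0, haN] at hsum
      rw [← hsum]
      refine le_trans (norm_sum_le _ _) ?_
      have hpiece : ∀ k ∈ Finset.range N,
          ‖∫ s in a k..a (k+1), (u s (φuh s y) - uh s (φuh s y))‖
            ≤ 2*R^2*(t'/N)^2 + 2*ρ := by
        intro k hk
        have hk' : k < N := Finset.mem_range.1 hk
        have hIk0 : a k ∈ Icc (0:ℝ) T := haT k hk'.le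
        have hIk1 : a (k+1) ∈ Icc (0:ℝ) T := haT (k+1) hk'
        have hklek1 : a k ≤ a (k+1) := hmono k (k+1) k.le_succ
        have hstep : a (k+1) - a k = t'/N := by
          show ((k+1 : ℕ) : ℝ) * (t'/N) - (k:ℝ) * (t'/N) = t'/N
          push_cast; ring
        have hwxk : IntervalIntegrable
            (fun s => u s (φuh (a k) y) - uh s (φuh (a k) y)) volume (a k) (a (k+1)) :=
          hw_int _ (a k) (a (k+1)) hIk0.1 hklek1 hIk1.2
        have hgwk : IntervalIntegrable
            (fun s => u s (φuh s y) - uh s (φuh s y)) volume (a k) (a (k+1)) :=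
          hgw_int (a k) (a (k+1)) hIk0.1 hklek1 hIk1.2
        have hsplit : (∫ s in a k..a (k+1), (u s (φuh s y) - uh s (φuh s y)))
            = (∫ s in a k..a (k+1),
                ((u s (φuh s y) - uh s (φuh s y)) - (u s (φuh (a k) y) - uh s (φuh (a k) y))))
              + ∫ s in a k..a (k+1), (u s (φuh (a k) y) - uh s (φuh (a k) y)) := by
          rw [← intervalIntegral.integral_add (hgwk.sub hwxk) hwxk]
          congr 1
          funext s
          abel
        rw [hsplit]
        refine le_trans (norm_add_le _ _) (add_le_add ?_ ?_)
        · have hptw : ∀ s ∈ uIoc (a k) (a (k+1)),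
              ‖(u s (φuh s y) - uh s (φuh s y)) - (u s (φuh (a k) y) - uh s (φuh (a k) y))‖
                ≤ 2*R^2*(t'/N) := by
            intro s hs
            rw [uIoc_of_le hklek1] at hs
            have hsIcc : s ∈ Icc (0:ℝ) T := ⟨hIk0.1.trans hs.1.le, hs.2.trans hIk1.2⟩
            have hdist : ‖φuh s y - φuh (a k) y‖ ≤ R * (t'/N) := by
              have hδφ : φuh s y - φuh (a k) y = ∫ r in (a k)..s, uh r (φuh r y) := by
                rw [hflow_uh s hsIcc y, hflow_uh (a k) hIk0 y,
                  ← intervalIntegral.integral_interval_sub_left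
                    (hsub hIuh 0 s le_rfl hsIcc.1 hsIcc.2)
                    (hsub hIuh 0 (a k) le_rfl hIk0.1 hIk0.2)]
                abel
              rw [hδφ]
              refine le_trans
                (intervalIntegral.norm_integral_le_of_norm_le_const (C := R)
                  fun r hr => ?_) ?_
              · rw [uIoc_of_le hs.1.le] at hr
                exact hbuh r ⟨hIk0.1.trans hr.1.le, hr.2.trans hsIcc.2⟩ _
              · rw [abs_of_nonneg (by linarith [hs.1.le] : (0:ℝ) ≤ s - a k)]
                have h2 : s - a k ≤ t'/N := by linarith [hs.2, hstep]
                exact mul_le_mul_of_nonneg_left h2 hR0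
            have heq : (u s (φuh s y) - uh s (φuh s y))
                - (u s (φuh (a k) y) - uh s (φuh (a k) y))
                = (u s (φuh s y) - u s (φuh (a k) y))
                  - (uh s (φuh s y) - uh s (φuh (a k) y)) := by abel
            rw [heq]
            calc ‖(u s (φuh s y) - u s (φuh (a k) y))
                  - (uh s (φuh s y) - uh s (φuh (a k) y))‖
                ≤ ‖u s (φuh s y) - u s (φuh (a k) y)‖
                  + ‖uh s (φuh s y) - uh s (φuh (a k) y)‖ := norm_sub_le _ _
              _ ≤ R * ‖φuh s y - φuh (a k) y‖ + R * ‖φuh s y - φuh (a k) y‖ :=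
                  add_le_add (hLipu s hsIcc _ _) (hLipuh s hsIcc _ _)
              _ ≤ R * (R * (t'/N)) + R * (R * (t'/N)) := by
                  have := mul_le_mul_of_nonneg_left hdist hR0; linarith
              _ = 2*R^2*(t'/N) := by ring
          refine le_trans (intervalIntegral.norm_integral_le_of_norm_le_const hptw) ?_
          have habs : |a (k+1) - a k| = t'/N := by rw [hstep]; exact abs_of_nonneg hh0
          rw [habs]
          apply le_of_eq; ring
        · rw [← intervalIntegral.integral_interval_sub_left
              (hw_int _ 0 (a (k+1)) le_rfl hIk1.1 hIk1.2)
              (hw_int _ 0 (a k) le_rfl hIk0.1 hIk0.2)]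
          refine le_trans (norm_sub_le _ _) ?_
          have h1 := hρb (a (k+1)) hIk1 (φuh (a k) y)
          have h2 := hρb (a k) hIk0 (φuh (a k) y)
          linarith
      calc (∑ k ∈ Finset.range N,
            ‖∫ s in a k..a (k+1), (u s (φuh s y) - uh s (φuh s y))‖)
          ≤ ∑ _k ∈ Finset.range N, (2*R^2*(t'/N)^2 + 2*ρ) := Finset.sum_le_sum hpiece
        _ = N * (2*R^2*(t'/N)^2 + 2*ρ) := by
            rw [Finset.sum_const, Finset.card_range, nsmul_eq_mul]
        _ = 2*R^2*t'^2/N + 2*ρ*N := by field_simp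
    rcases eq_or_lt_of_le hρ0 with hρz | hρpos
    · have hσz : σ = 0 := by rw [hσdef, ← hρz, Real.sqrt_zero]
      have hfe : (fun N : ℕ => 2*R^2*t'^2/N + 2*ρ*N) = fun N : ℕ => 2*R^2*t'^2/N := by
        funext N; rw [← hρz]; ring
      have hlim : Tendsto (fun N : ℕ => 2*R^2*t'^2/N + 2*ρ*N) atTop (𝓝 0) := by
        rw [hfe]; exact tendsto_const_div_atTop_nhds_zero_nat _
      have hle0 := ge_of_tendsto hlim (eventually_atTop.2 ⟨1, fun N hN => hpart N hN⟩)
      have hAσ : A * σ = 0 := by rw [hσz, mul_zero]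
      linarith
    · have hσpos : 0 < σ := Real.sqrt_pos.2 hρpos
      set N : ℕ := Nat.ceil (t'/σ) + 1 with hNdef
      have hN0 : 0 < N := Nat.succ_pos _
      have hNR : (0:ℝ) < N := Nat.cast_pos.2 hN0
      have hNge : t'/σ ≤ (N:ℝ) := by
        have h := Nat.le_ceil (t'/σ)
        have : ((Nat.ceil (t'/σ) : ℕ) : ℝ) ≤ (N:ℝ) := by
          rw [hNdef]; push_cast; linarith
        linarith
      have hNle : (N:ℝ) ≤ t'/σ + 2 := by
        have h := Nat.ceil_lt_add_one (div_nonneg ht'.1 hσ0)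
        rw [hNdef]; push_cast; linarith
      have hNt : t' ≤ N * σ := by
        rw [div_le_iff₀ hσpos] at hNge; linarith
      refine le_trans (hpart N hN0) ?_
      have h1 : 2*R^2*t'^2/N ≤ 2*R^2*(T*σ) := by
        rw [div_le_iff₀ hNR]
        have h2 := mul_le_mul_of_nonneg_left hNt (mul_nonneg (by positivity : (0:ℝ) ≤ 2*R^2) ht'.1)
        have h3 := mul_le_mul_of_nonneg_left ht'.2
          (mul_nonneg (mul_nonneg (by positivity : (0:ℝ) ≤ 2*R^2) hσ0) hNR.le)
        nlinarith [h2, h3]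
      have hρdiv : ρ * (t'/σ) = t' * σ := by
        rw [← hσsq]
        field_simp
      have h2 : 2*ρ*N ≤ 2*(T*σ) + 4*σ := by
        have hb1 : 2*ρ*(N:ℝ) ≤ 2*ρ*(t'/σ+2) :=
          mul_le_mul_of_nonneg_left hNle (by linarith : (0:ℝ) ≤ 2*ρ)
        have hb2 : 2*ρ*(t'/σ+2) = 2*(t'*σ) + 4*ρ := by
          rw [mul_add, show 2*ρ*(t'/σ) = 2*(ρ*(t'/σ)) from by ring, hρdiv]
          ring
        have hb3 : 2*(t'*σ) ≤ 2*(T*σ) := by nlinarith [ht'.2, hσ0]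
        have hb4 : 4*ρ ≤ 4*σ := by linarith
        linarith
      have hAσ : A*σ = 2*R^2*(T*σ) + (2*(T*σ) + 4*σ) := by rw [hAdef]; ring
      linarith
  -- the Gronwall-type inequality
  have hkey : ∀ t' ∈ Icc (0:ℝ) T, δ t' ≤ A*σ + R * ∫ s in (0:ℝ)..t', δ s := by
    intro t' ht'
    have hgu_i := hsub hIu 0 t' le_rfl ht'.1 ht'.2
    have hguh_i := hsub hIuh 0 t' le_rfl ht'.1 ht'.2
    have hgc_i := hsub hIc 0 t' le_rfl ht'.1 ht'.2
    have hsplit : φu t' y - φuh t' y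
        = (∫ s in (0:ℝ)..t', (u s (φu s y) - u s (φuh s y)))
          + ∫ s in (0:ℝ)..t', (u s (φuh s y) - uh s (φuh s y)) := by
      rw [hflow_u t' ht' y, hflow_uh t' ht' y,
        intervalIntegral.integral_sub hgu_i hgc_i, intervalIntegral.integral_sub hgc_i hguh_i]
      abel
    have hpart1 : ‖∫ s in (0:ℝ)..t', (u s (φu s y) - u s (φuh s y))‖
        ≤ R * ∫ s in (0:ℝ)..t', δ s := by
      refine le_trans (intervalIntegral.norm_integral_le_integral_norm ht'.1) ?_
      rw [← intervalIntegral.integral_const_mul]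
      refine intervalIntegral.integral_mono_on ht'.1 (hgu_i.sub hgc_i).norm
        ((hδint t' ht').const_mul R) fun s hs => ?_
      exact hLipu s ⟨hs.1, hs.2.trans ht'.2⟩ _ _
    calc δ t' = ‖φu t' y - φuh t' y‖ := rfl
      _ ≤ ‖∫ s in (0:ℝ)..t', (u s (φu s y) - u s (φuh s y))‖
          + ‖∫ s in (0:ℝ)..t', (u s (φuh s y) - uh s (φuh s y))‖ := by
            rw [hsplit]; exact norm_add_le _ _
      _ ≤ (R * ∫ s in (0:ℝ)..t', δ s) + A*σ := add_le_add hpart1 (hB t' ht')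
      _ = A*σ + R * ∫ s in (0:ℝ)..t', δ s := by ring
  -- a priori bound
  have hMb : ∀ t' ∈ Icc (0:ℝ) T, δ t' ≤ 2*R*T := by
    intro t' ht'
    have h1 : ‖∫ s in (0:ℝ)..t', u s (φu s y)‖ ≤ R * t' := by
      have h := intervalIntegral.norm_integral_le_of_norm_le_const (C := R)
        (f := fun s => u s (φu s y)) (a := 0) (b := t') fun s hs => by
          rw [uIoc_of_le ht'.1] at hs; exact hbu s ⟨hs.1.le, hs.2.trans ht'.2⟩ _
      rwa [sub_zero, abs_of_nonneg ht'.1] at h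
    have h2 : ‖∫ s in (0:ℝ)..t', uh s (φuh s y)‖ ≤ R * t' := by
      have h := intervalIntegral.norm_integral_le_of_norm_le_const (C := R)
        (f := fun s => uh s (φuh s y)) (a := 0) (b := t') fun s hs => by
          rw [uIoc_of_le ht'.1] at hs; exact hbuh s ⟨hs.1.le, hs.2.trans ht'.2⟩ _
      rwa [sub_zero, abs_of_nonneg ht'.1] at h
    have h3 : δ t' = ‖(∫ s in (0:ℝ)..t', u s (φu s y))
        - ∫ s in (0:ℝ)..t', uh s (φuh s y)‖ := by
      show ‖φu t' y - φuh t' y‖ = _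
      rw [hflow_u t' ht' y, hflow_uh t' ht' y]
      congr 1; abel
    rw [h3]
    have h4 := norm_sub_le (∫ s in (0:ℝ)..t', u s (φu s y))
      (∫ s in (0:ℝ)..t', uh s (φuh s y))
    have h5 : R * t' ≤ R * T := mul_le_mul_of_nonneg_left ht'.2 hR0
    linarith
  -- Picard-type induction
  have hind : ∀ n : ℕ, ∀ t' ∈ Icc (0:ℝ) T,
      δ t' ≤ (A*σ) * (∑ k ∈ Finset.range n, (R*t')^k / (Nat.factorial k))
        + (2*R*T) * ((R*t')^n / (Nat.factorial n)) := by
    intro n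
    induction n with
    | zero =>
      intro t' ht'
      simpa using hMb t' ht'
    | succ n ih =>
      intro t' ht'
      have hpc : Continuous fun s : ℝ =>
          (A*σ) * (∑ k ∈ Finset.range n, (R*s)^k / (Nat.factorial k))
            + (2*R*T) * ((R*s)^n / (Nat.factorial n)) :=
        (continuous_const.mul (continuous_finset_sum _ fun k _ =>
          ((continuous_const.mul continuous_id).pow k).div_const _)).add
          (continuous_const.mul (((continuous_const.mul continuous_id).pow n).div_const _))
      have hle : (∫ s in (0:ℝ)..t', δ s)
          ≤ ∫ s in (0:ℝ)..t', ((A*σ) * (∑ k ∈ Finset.range n, (R*s)^k / (Nat.factorial k))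
              + (2*R*T) * ((R*s)^n / (Nat.factorial n))) :=
        intervalIntegral.integral_mono_on ht'.1 (hδint t' ht') (hpc.intervalIntegrable 0 t')
          fun s hs => ih s ⟨hs.1, hs.2.trans ht'.2⟩
      have hR' := mul_le_mul_of_nonneg_left hle hR0
      calc δ t' ≤ A*σ + R * ∫ s in (0:ℝ)..t', δ s := hkey t' ht'
        _ ≤ A*σ + R * ∫ s in (0:ℝ)..t',
              ((A*σ) * (∑ k ∈ Finset.range n, (R*s)^k / (Nat.factorial k))
                + (2*R*T) * ((R*s)^n / (Nat.factorial n))) := by linarith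
        _ = A*σ + ((A*σ) * (∑ k ∈ Finset.range n, (R*t')^(k+1) / (Nat.factorial (k+1)))
              + (2*R*T) * ((R*t')^(n+1) / (Nat.factorial (n+1)))) := by
            rw [gronwall_int]
        _ = (A*σ) * (∑ k ∈ Finset.range (n+1), (R*t')^k / (Nat.factorial k))
              + (2*R*T) * ((R*t')^(n+1) / (Nat.factorial (n+1))) := by
            rw [Finset.sum_range_succ', pow_zero, Nat.factorial_zero, Nat.cast_one, div_one]
            ring
  -- pass to the limit
  have hfin : ∀ n : ℕ, δ t ≤ (A*σ) * Real.exp (R*T)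
      + (2*R*T) * ((R*t)^n / (Nat.factorial n)) := by
    intro n
    refine (hind n t ht).trans ?_
    have h1 : (∑ k ∈ Finset.range n, (R*t)^k / (Nat.factorial k)) ≤ Real.exp (R*T) := by
      refine le_trans (Real.sum_le_exp_of_nonneg (mul_nonneg hR0 ht.1) n) ?_
      exact Real.exp_le_exp.2 (mul_le_mul_of_nonneg_left ht.2 hR0)
    have h2 := mul_le_mul_of_nonneg_left h1 (mul_nonneg hA0.le hσ0)
    linarith
  have hlim : Tendsto (fun n : ℕ => (A*σ) * Real.exp (R*T)
      + (2*R*T) * ((R*t)^n / (Nat.factorial n))) atTop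
      (𝓝 ((A*σ) * Real.exp (R*T) + (2*R*T) * 0)) :=
    tendsto_const_nhds.add
      ((FloorSemiring.tendsto_pow_div_factorial_atTop (R*t)).const_mul (2*R*T))
  have hδle : δ t ≤ (A*σ) * Real.exp (R*T) + (2*R*T) * 0 :=
    ge_of_tendsto hlim (Filter.Eventually.of_forall hfin)
  have hfinal : δ t ≤ A * Real.exp (R*T) * σ := by
    rw [mul_zero, add_zero] at hδle
    calc δ t ≤ (A*σ) * Real.exp (R*T) := hδle
      _ = A * Real.exp (R*T) * σ := by ring
  show ‖φu t y - φuh t y‖ ≤ A * Real.exp (R*T) * ρ ^ ((1:ℝ)/2)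
  rw [← Real.sqrt_eq_rpow]
  exact hfinal
end AuxLemmas
end
end

section
/- Let X be a normed vector space, T > 0, m ≥ 1 an integer, and let ζ¹, …, ζ^m ∈ X satisfy Σ_{j=1}^m ζ^j = 0. Let ζ : ℝ → X be the 1-periodic function with ζ(s) = ζ^j for s ∈ [(j−1)/m, j/m), j = 1, …, m, and for n ≥ 1 set ζ_n(t) := ζ(nt/T). Then sup_{t∈[0,T]} ‖∫₀ᵗ ζ_n(s) ds‖_X ≤ (T/n)·max_{1≤j≤m} ‖ζ^j‖_X; in particular sup_{t∈[0,T]} ‖∫₀ᵗ ζ_n(s) ds‖_X → 0 as n → ∞. -/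
open MeasureTheory Set Filter

/-- Fast oscillating piecewise-constant controls with zero average have
small primitive: if `ζ¹ + ⋯ + ζ^m = 0`, `ζ` is the 1-periodic step function taking value
`ζ^j` on `[(j−1)/m, j/m)` and `ζ_n(t) = ζ(nt/T)`, then
`sup_{t∈[0,T]} ‖∫₀ᵗ ζ_n(s) ds‖ ≤ (T/n) max_j ‖ζ^j‖`, and in particular this sup tends
to `0` as `n → ∞`. -/
theorem oscillating_primitive_small
    (X : Type*) [NormedAddCommGroup X] [NormedSpace ℝ X] [CompleteSpace X]
    (T : ℝ) (hT : 0 < T) (m : ℕ) (hm : 1 ≤ m)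
    (ζs : Fin m → X) (hsum : ∑ j, ζs j = 0)
    (ζ : ℝ → X)
    (hper : ∀ s : ℝ, ζ (s + 1) = ζ s)
    (hstep : ∀ j : Fin m, ∀ s ∈ Ico ((j : ℝ) / m) (((j : ℝ) + 1) / m), ζ s = ζs j) :
    (∀ n : ℕ, 1 ≤ n → ∀ M : ℝ, (∀ j, ‖ζs j‖ ≤ M) →
      ∀ t ∈ Icc (0 : ℝ) T, ‖∫ s in (0 : ℝ)..t, ζ (n * s / T)‖ ≤ (T / n) * M) ∧
    Tendsto (fun n : ℕ => ⨆ t ∈ Icc (0 : ℝ) T, ‖∫ s in (0 : ℝ)..t, ζ (n * s / T)‖)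
      atTop (nhds 0) := by
  have hm' : 0 < m := hm
  have hm0 : (0:ℝ) < m := by exact_mod_cast hm
  have hper' : Function.Periodic ζ 1 := hper
  -- explicit formula for ζ
  set G : ℤ → X := fun k => ζs ⟨k.toNat % m, Nat.mod_lt _ hm'⟩ with hG
  -- on [0,1), ζ is given by the step values
  have hval : ∀ x : ℝ, 0 ≤ x → x < 1 → ζ x = G ⌊x * m⌋ := by
    intro x hx0 hx1
    have hk0 : (0:ℤ) ≤ ⌊x * m⌋ := Int.floor_nonneg.2 (by positivity)
    have hkm : ⌊x * m⌋ < (m:ℤ) := by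
      have hxm : x * m < m := by nlinarith
      exact Int.floor_lt.2 (by exact_mod_cast hxm)
    set k : ℤ := ⌊x * m⌋ with hk
    have hkn : k.toNat < m := by omega
    have hcast : ((k.toNat : ℕ) : ℝ) = (k : ℝ) := by
      have : ((k.toNat : ℤ) : ℝ) = (k:ℝ) :=
        congrArg (Int.cast : ℤ → ℝ) (Int.toNat_of_nonneg hk0)
      exact_mod_cast this
    have hmem : x ∈ Ico (((⟨k.toNat, hkn⟩ : Fin m) : ℝ) / m) ((((⟨k.toNat, hkn⟩ : Fin m) : ℝ) + 1) / m) := by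
      constructor
      · rw [div_le_iff₀ hm0]
        simp only [Fin.val_mk]
        rw [hcast]
        exact Int.floor_le (x * m)
      · rw [lt_div_iff₀ hm0]
        simp only [Fin.val_mk]
        rw [hcast]
        exact Int.lt_floor_add_one (x * m)
    have := hstep ⟨k.toNat, hkn⟩ x hmem
    rw [this, hG]
    congr 1
    exact Fin.ext (by simp [Nat.mod_eq_of_lt hkn])
  have hform : ∀ s : ℝ, ζ s = G ⌊Int.fract s * m⌋ := by
    intro s
    have h1 : ζ (s - (⌊s⌋ : ℝ)) = ζ s := by
      simpa using hper'.sub_zsmul_eq (x := s) ⌊s⌋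
    rw [← h1]
    exact hval _ (Int.fract_nonneg s) (Int.fract_lt_one s)
  -- ζ is bounded by any bound on the values
  have hζbdd : ∀ M : ℝ, (∀ j, ‖ζs j‖ ≤ M) → ∀ s, ‖ζ s‖ ≤ M := by
    intro M hM s
    rw [hform s]
    exact hM _
  -- strong measurability
  have hmeasζ : StronglyMeasurable ζ := by
    have hidx : Measurable fun s : ℝ =>
        ((fun k : ℤ => (⟨k.toNat % m, Nat.mod_lt _ hm'⟩ : Fin m)) ⌊Int.fract s * m⌋) := by
      have h1 : Measurable fun s : ℝ => ⌊Int.fract s * m⌋ :=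
        Int.measurable_floor.comp (measurable_fract.mul_const _)
      exact (measurable_from_top (f := fun k : ℤ => (⟨k.toNat % m, Nat.mod_lt _ hm'⟩ : Fin m))).comp h1
    have hfac : ζ = ζs ∘ fun s : ℝ =>
        ((fun k : ℤ => (⟨k.toNat % m, Nat.mod_lt _ hm'⟩ : Fin m)) ⌊Int.fract s * m⌋) :=
      funext fun s => hform s
    rw [hfac]
    exact StronglyMeasurable.of_discrete.comp_measurable hidx
  have hint : ∀ a b : ℝ, IntervalIntegrable ζ volume a b := by
    intro a b
    rw [intervalIntegrable_iff]
    have hCex : ∀ j : Fin m, ‖ζs j‖ ≤ Finset.univ.sup' ⟨⟨0, hm'⟩, Finset.mem_univ _⟩ (fun j => ‖ζs j‖) :=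
      fun j => Finset.le_sup' (fun j => ‖ζs j‖) (Finset.mem_univ j)
    refine Integrable.mono' (integrableOn_const ?_) hmeasζ.aestronglyMeasurable
      (Filter.Eventually.of_forall fun s => hζbdd _ hCex s)
    exact measure_Ioc_lt_top.ne
  -- integral over one period is zero
  have hone : (∫ x in (0:ℝ)..1, ζ x) = 0 := by
    set a : ℕ → ℝ := fun i => i / m with ha
    have hsum' : ∑ k ∈ Finset.range m, ∫ x in (a k)..(a (k+1)), ζ x = ∫ x in (a 0)..(a m), ζ x :=
      intervalIntegral.sum_integral_adjacent_intervals (fun k _ => hint _ _)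
    have ha0 : a 0 = 0 := by simp [ha]
    have ham : a m = 1 := by simp only [ha]; exact div_self hm0.ne'
    have hpiece : ∀ k ∈ Finset.range m,
        (∫ x in (a k)..(a (k+1)), ζ x) = (m:ℝ)⁻¹ • ζs ⟨k % m, Nat.mod_lt _ hm'⟩ := by
      intro k hk
      rw [Finset.mem_range] at hk
      have hle : a k ≤ a (k+1) := by
        simp only [ha]
        gcongr
        push_cast
        linarith
      have hne : ∀ᵐ x : ℝ, x ≠ a (k+1) := by
        refine ae_iff.mpr ?_
        simpa using measure_singleton (a (k+1))
      have hae : ∀ᵐ x : ℝ, x ∈ Set.uIoc (a k) (a (k+1)) → ζ x = ζs ⟨k % m, Nat.mod_lt _ hm'⟩ := by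
        filter_upwards [hne] with x hx hxI
        rw [Set.uIoc_of_le hle] at hxI
        have hmem : x ∈ Ico (((⟨k % m, Nat.mod_lt _ hm'⟩ : Fin m) : ℝ) / m)
            ((((⟨k % m, Nat.mod_lt _ hm'⟩ : Fin m) : ℝ) + 1) / m) := by
          simp only [Fin.val_mk, Nat.mod_eq_of_lt hk]
          constructor
          · exact le_of_lt (by simpa [ha] using hxI.1)
          · have : x < a (k+1) := lt_of_le_of_ne hxI.2 hx
            simpa [ha, Nat.cast_add, Nat.cast_one] using this
        exact hstep _ x hmem
      rw [intervalIntegral.integral_congr_ae hae, intervalIntegral.integral_const]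
      congr 1
      simp only [ha]; rw [Nat.cast_add, Nat.cast_one, ← sub_div, add_sub_cancel_left, one_div]
    rw [Finset.sum_congr rfl hpiece, ha0, ham] at hsum'
    rw [← hsum', ← Finset.smul_sum]
    have : ∑ k ∈ Finset.range m, ζs ⟨k % m, Nat.mod_lt _ hm'⟩ = ∑ j : Fin m, ζs j := by
      rw [← Fin.sum_univ_eq_sum_range (fun k => ζs ⟨k % m, Nat.mod_lt _ hm'⟩) m]
      refine Finset.sum_congr rfl fun j _ => ?_
      congr 1
      exact Fin.ext (by simp [Nat.mod_eq_of_lt j.2])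
    rw [this, hsum, smul_zero]
  -- integral over [0, integer] is zero
  have hzsmul : ∀ n : ℤ, (∫ x in (0:ℝ)..(n:ℝ), ζ x) = 0 := by
    intro n
    have := hper'.intervalIntegral_add_zsmul_eq n 0 hint
    simpa [hone] using this
  -- the primitive of ζ is bounded
  have hprim : ∀ M : ℝ, (∀ j, ‖ζs j‖ ≤ M) → ∀ x : ℝ, ‖∫ u in (0:ℝ)..x, ζ u‖ ≤ M := by
    intro M hM x
    have hM0 : 0 ≤ M := le_trans (norm_nonneg _) (hM ⟨0, hm'⟩)
    have hsplit : (∫ u in (0:ℝ)..x, ζ u) = ∫ u in ((⌊x⌋ : ℝ))..x, ζ u := by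
      rw [← intervalIntegral.integral_add_adjacent_intervals (hint 0 ⌊x⌋) (hint ⌊x⌋ x),
        hzsmul ⌊x⌋, zero_add]
    rw [hsplit]
    have hb := intervalIntegral.norm_integral_le_of_norm_le_const
      (C := M) (f := ζ) (a := ((⌊x⌋ : ℝ))) (b := x) (fun u _ => hζbdd M hM u)
    have h1 : |x - (⌊x⌋ : ℝ)| ≤ 1 := by
      rw [abs_of_nonneg (by linarith [Int.floor_le x])]
      linarith [Int.lt_floor_add_one x]
    calc ‖∫ u in ((⌊x⌋ : ℝ))..x, ζ u‖ ≤ M * |x - (⌊x⌋ : ℝ)| := hb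
    _ ≤ M * 1 := mul_le_mul_of_nonneg_left h1 hM0
    _ = M := mul_one M
  -- main bound
  have hmain : ∀ n : ℕ, 1 ≤ n → ∀ M : ℝ, (∀ j, ‖ζs j‖ ≤ M) →
      ∀ t ∈ Icc (0 : ℝ) T, ‖∫ s in (0 : ℝ)..t, ζ (n * s / T)‖ ≤ (T / n) * M := by
    intro n hn M hM t ht
    have hn0 : (0:ℝ) < n := by exact_mod_cast hn
    have hc0 : (0:ℝ) < (n:ℝ) / T := div_pos hn0 hT
    have hc : ((n:ℝ) / T) ≠ 0 := ne_of_gt hc0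
    have heq : (∫ s in (0 : ℝ)..t, ζ (n * s / T)) = (∫ s in (0 : ℝ)..t, ζ (s * ((n:ℝ) / T))) :=
      intervalIntegral.integral_congr fun s _ => congrArg ζ (by ring)
    rw [heq, intervalIntegral.integral_comp_mul_right ζ hc]
    rw [norm_smul, Real.norm_eq_abs, abs_of_pos (inv_pos.2 hc0)]
    have hinv : ((n:ℝ) / T)⁻¹ = T / n := by
      field_simp
    rw [hinv, zero_mul]
    have := hprim M hM (t * ((n:ℝ) / T))
    have hTn : 0 ≤ T / n := le_of_lt (div_pos hT hn0)
    exact mul_le_mul_of_nonneg_left this hTn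
  refine ⟨hmain, ?_⟩
  -- the sup tends to zero
  set C : ℝ := Finset.univ.sup' ⟨⟨0, hm'⟩, Finset.mem_univ _⟩ (fun j => ‖ζs j‖) with hCdef
  have hC : ∀ j, ‖ζs j‖ ≤ C := fun j => Finset.le_sup' (fun j => ‖ζs j‖) (Finset.mem_univ j)
  have hC0 : 0 ≤ C := le_trans (norm_nonneg _) (hC ⟨0, hm'⟩)
  apply squeeze_zero' ?_ ?_ (tendsto_const_div_atTop_nhds_zero_nat (T * C))
  · exact Eventually.of_forall fun n =>
      Real.iSup_nonneg fun t => Real.iSup_nonneg fun _ => norm_nonneg _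
  · filter_upwards [eventually_ge_atTop 1] with n hn
    have hn0 : (0:ℝ) < n := by exact_mod_cast hn
    have hTCn : 0 ≤ T * C / n := div_nonneg (mul_nonneg hT.le hC0) hn0.le
    refine Real.iSup_le (fun t => Real.iSup_le (fun ht => ?_) hTCn) hTCn
    have := hmain n hn C hC t ht
    calc ‖∫ s in (0 : ℝ)..t, ζ (n * s / T)‖ ≤ (T / n) * C := this
    _ = T * C / n := by ring
end

section
/- A set K ⊆ ℤ³ is a generator of ℤ³ (i.e., every element of ℤ³ is a finite linear combination of elements of K with integer coefficients) if and only if the greatest common divisor of the set of integers {det(a,b,c) : a, b, c ∈ K} equals 1, where det(a,b,c) denotes the determinant of the 3×3 integer matrix with rows a, b, c. -/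
private lemma detRowAdd₁ (x y b c : Fin 3 → ℤ) :
    (Matrix.of ![x + y, b, c]).det =
      (Matrix.of ![x, b, c]).det + (Matrix.of ![y, b, c]).det := by
  simp [Matrix.det_fin_three]; ring

private lemma detRowAdd₂ (a x y c : Fin 3 → ℤ) :
    (Matrix.of ![a, x + y, c]).det =
      (Matrix.of ![a, x, c]).det + (Matrix.of ![a, y, c]).det := by
  simp [Matrix.det_fin_three]; ring

private lemma detRowAdd₃ (a b x y : Fin 3 → ℤ) :
    (Matrix.of ![a, b, x + y]).det =
      (Matrix.of ![a, b, x]).det + (Matrix.of ![a, b, y]).det := by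
  simp [Matrix.det_fin_three]; ring

private lemma detRowNeg₁ (x b c : Fin 3 → ℤ) :
    (Matrix.of ![-x, b, c]).det = -(Matrix.of ![x, b, c]).det := by
  simp [Matrix.det_fin_three]; ring

private lemma detRowNeg₂ (a x c : Fin 3 → ℤ) :
    (Matrix.of ![a, -x, c]).det = -(Matrix.of ![a, x, c]).det := by
  simp [Matrix.det_fin_three]; ring

private lemma detRowNeg₃ (a b x : Fin 3 → ℤ) :
    (Matrix.of ![a, b, -x]).det = -(Matrix.of ![a, b, x]).det := by
  simp [Matrix.det_fin_three]; ring

private lemma detRowZero₁ (b c : Fin 3 → ℤ) : (Matrix.of ![0, b, c]).det = 0 := by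
  simp [Matrix.det_fin_three]

private lemma detRowZero₂ (a c : Fin 3 → ℤ) : (Matrix.of ![a, 0, c]).det = 0 := by
  simp [Matrix.det_fin_three]

private lemma detRowZero₃ (a b : Fin 3 → ℤ) : (Matrix.of ![a, b, 0]).det = 0 := by
  simp [Matrix.det_fin_three]

/-- Any `mulVec` by the transpose of the row matrix is a combination of rows. -/
private lemma transpose_mulVec (a b c : Fin 3 → ℤ) (w : Fin 3 → ℤ) :
    (Matrix.of ![a, b, c]).transpose.mulVec w = w 0 • a + w 1 • b + w 2 • c := by
  funext j
  simp [Matrix.mulVec, dotProduct, Fin.sum_univ_three, Matrix.transpose_apply]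
  ring

/-- A set `K ⊆ ℤ³` generates `ℤ³` as a group (every element of `ℤ³` is
an integer linear combination of elements of `K`) if and only if the greatest common
divisor of the determinants `det(a,b,c)`, `a, b, c ∈ K`, equals `1`, i.e. every common
divisor of these determinants is a unit. -/
theorem generator_iff_gcd_det_eq_one (K : Set (Fin 3 → ℤ)) :
    AddSubgroup.closure K = ⊤ ↔
      ∀ g : ℤ, (∀ a ∈ K, ∀ b ∈ K, ∀ c ∈ K, g ∣ (Matrix.of ![a, b, c]).det) → IsUnit g := by
  constructor
  · intro hK g hg
    have H1 : ∀ b ∈ K, ∀ c ∈ K, ∀ a ∈ AddSubgroup.closure K,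
        g ∣ (Matrix.of ![a, b, c]).det := by
      intro b hb c hc a ha
      induction ha using AddSubgroup.closure_induction with
      | mem x hx => exact hg x hx b hb c hc
      | zero => simp [detRowZero₁]
      | add x y _ _ hx hy => rw [detRowAdd₁]; exact dvd_add hx hy
      | neg x _ hx => rw [detRowNeg₁]; exact hx.neg_right
    have H2 : ∀ c ∈ K, ∀ a ∈ AddSubgroup.closure K, ∀ b ∈ AddSubgroup.closure K,
        g ∣ (Matrix.of ![a, b, c]).det := by
      intro c hc a ha b hb
      induction hb using AddSubgroup.closure_induction with
      | mem x hx => exact H1 x hx c hc a ha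
      | zero => simp [detRowZero₂]
      | add x y _ _ hx hy => rw [detRowAdd₂]; exact dvd_add hx hy
      | neg x _ hx => rw [detRowNeg₂]; exact hx.neg_right
    have H3 : ∀ a ∈ AddSubgroup.closure K, ∀ b ∈ AddSubgroup.closure K,
        ∀ c ∈ AddSubgroup.closure K, g ∣ (Matrix.of ![a, b, c]).det := by
      intro a ha b hb c hc
      induction hc using AddSubgroup.closure_induction with
      | mem x hx => exact H2 x hx a ha b hb
      | zero => simp [detRowZero₃]
      | add x y _ _ hx hy => rw [detRowAdd₃]; exact dvd_add hx hy
      | neg x _ hx => rw [detRowNeg₃]; exact hx.neg_right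
    have htop : ∀ v : Fin 3 → ℤ, v ∈ AddSubgroup.closure K := by
      intro v; rw [hK]; trivial
    have h1 : g ∣ (Matrix.of ![(![1,0,0] : Fin 3 → ℤ), ![0,1,0], ![0,0,1]]).det :=
      H3 _ (htop _) _ (htop _) _ (htop _)
    have : (Matrix.of ![(![1,0,0] : Fin 3 → ℤ), ![0,1,0], ![0,0,1]]).det = 1 := by
      simp [Matrix.det_fin_three]
    rw [this] at h1
    exact isUnit_of_dvd_one h1
  · intro h
    -- the set of determinants
    set S : Set ℤ := {d | ∃ a ∈ K, ∃ b ∈ K, ∃ c ∈ K, d = (Matrix.of ![a, b, c]).det} with hS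
    have hspan : Ideal.span S = ⊤ := by
      obtain ⟨g, hg⟩ := Submodule.IsPrincipal.principal (Ideal.span S)
      have hgu : IsUnit g := by
        apply h
        intro a ha b hb c hc
        have : (Matrix.of ![a, b, c]).det ∈ Ideal.span S :=
          Ideal.subset_span ⟨a, ha, b, hb, c, hc, rfl⟩
        rw [hg, Ideal.submodule_span_eq, Ideal.mem_span_singleton] at this
        exact this
      rw [hg, Ideal.submodule_span_eq, Ideal.span_singleton_eq_top]
      exact hgu
    -- key: d • v ∈ closure K for every d in the ideal span of S
    have key : ∀ d ∈ Ideal.span S, ∀ v : Fin 3 → ℤ, d • v ∈ AddSubgroup.closure K := by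
      intro d hd
      induction hd using Submodule.span_induction with
      | mem x hx =>
        obtain ⟨a, ha, b, hb, c, hc, rfl⟩ := hx
        intro v
        set M := Matrix.of ![a, b, c] with hM
        have hcr : M.det • v = M.transpose.mulVec ((M.transpose.adjugate).mulVec v) := by
          rw [Matrix.mulVec_mulVec, Matrix.mul_adjugate, Matrix.det_transpose,
            Matrix.smul_mulVec, Matrix.one_mulVec]
        rw [hcr, transpose_mulVec]
        have haK := AddSubgroup.subset_closure (k := K) ha
        have hbK := AddSubgroup.subset_closure (k := K) hb
        have hcK := AddSubgroup.subset_closure (k := K) hc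
        exact AddSubgroup.add_mem _
          (AddSubgroup.add_mem _ (AddSubgroup.zsmul_mem _ haK _)
            (AddSubgroup.zsmul_mem _ hbK _)) (AddSubgroup.zsmul_mem _ hcK _)
      | zero => intro v; simpa using AddSubgroup.zero_mem _
      | add x y _ _ hx hy =>
        intro v
        have := AddSubgroup.add_mem _ (hx v) (hy v)
        simpa [add_smul] using this
      | smul r x _ hx =>
        intro v
        rw [smul_eq_mul, mul_comm, ← smul_smul]
        exact hx (r • v)
    have hone : (1 : ℤ) ∈ Ideal.span S := by rw [hspan]; trivial
    rw [eq_top_iff]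
    intro v _
    simpa using key 1 hone v
end
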